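/- For all non-negative integers n, q, t, s, p with q ≥ 1, t < s, s + p < n, (s, p) ≠ (0, 0), and every sequence x ∈ A_q^n with more than one run, the strict inequality |B_{t,s,p}(x)| > Σ_{i=0}^{t+p} C(n+t-s, i) (q-1)^i holds. -/

import Mathlib

/-- The subsequence of `x` indexed by the finite set `S` of size `m`,
entries taken in increasing index order. -/
def subseqOf {q n m : ℕ} (x : Fin n → Fin q) (S : Finset (Fin n)) (h : S.card = m) :
    Fin m → Fin q :=
  fun i => x ((S.orderIsoOfFin h i : Fin n))

/-- The insertion/deletion/substitution ball of `x ∈ A_q^n`: all sequences `z` of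
length `m` such that some subsequence of `x` of length `n - s` is within Hamming
distance `p` of some subsequence of `z` of the same length.  For the `t`-insertion
`s`-deletion `p`-substitution ball `B_{t,s,p}(x)`, take `m = n + t - s`. -/
def idsBall (q s p : ℕ) {n m : ℕ} (x : Fin n → Fin q) : Set (Fin m → Fin q) :=
  { z | ∃ (S1 : Finset (Fin n)) (S2 : Finset (Fin m))
      (h1 : S1.card = n - s) (h2 : S2.card = n - s),
      hammingDist (subseqOf x S1 h1) (subseqOf z S2 h2) ≤ p }

/-!
Put `m = n + t - s ≤ n` and let `y` be the length-`m` prefix of `x`. Every word within Hamming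
distance `t + p` of `y` lies in the ball: delete `t` of its positions covering all but `p` of the
mismatches, and delete from `x` the same positions together with its last `s - t` symbols. This
gives the whole Hamming ball around `y`. One more word lies in the ball but outside that Hamming
ball: as `s ≥ 1` and `x` is not constant, some subsequence `u` of `x` of length `n - s` differs
from the prefix `v` of the same length; a word within distance `p` of `u` but farther than `p`
from `v`, followed by `t` symbols that all differ from the corresponding symbols of `y`, is at
distance more than `t + p` from `y`.
-/

open Finset

section Hamming

variable {ι α : Type*} [Fintype ι] [DecidableEq α]

theorem hammingDist_eq_card_of_forall_ne {u v : ι → α} (h : ∀ i, u i ≠ v i) :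
    hammingDist u v = Fintype.card ι := by
  simp [hammingDist, h]

theorem hammingDist_append {k l : ℕ} (a c : Fin k → α) (b d : Fin l → α) :
    hammingDist (Fin.append a b) (Fin.append c d) = hammingDist a c + hammingDist b d := by
  simp only [hammingDist, card_filter, Fin.sum_univ_add, Fin.append_left, Fin.append_right]

theorem exists_hammingDist_le_lt [DecidableEq ι] [Nontrivial α] {u v : ι → α} (huv : u ≠ v)
    {p : ℕ} (hp : p < Fintype.card ι) :
    ∃ w : ι → α, hammingDist w u ≤ p ∧ p < hammingDist w v := by
  set D : Finset ι := {i | u i ≠ v i}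
  have hD : 0 < #D := hammingDist_pos.2 huv
  -- change `u` on `p + 1 - #D` positions where `u` and `v` agree
  obtain ⟨E, hED, hE⟩ := exists_subset_card_eq (s := Dᶜ) (n := p + 1 - #D)
    (by rw [card_compl]; omega)
  choose f hf using fun a : α => exists_ne a
  set w : ι → α := fun i => if i ∈ E then f (u i) else u i
  have hwu : ({i | w i ≠ u i} : Finset ι) = E := by
    ext i
    by_cases hi : i ∈ E <;> simp [w, hi, hf]
  have hwv : ({i | w i ≠ v i} : Finset ι) = D ∪ E := by
    ext i
    by_cases hi : i ∈ E
    · have hui : u i = v i := by simpa [D] using hED hi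
      simp [w, hi, hf, ← hui]
    · simp [w, D, hi]
  refine ⟨w, ?_, ?_⟩
  · rw [hammingDist, hwu]
    omega
  · rw [hammingDist, hwv,
      card_union_of_disjoint (disjoint_of_subset_right hED disjoint_compl_right)]
    omega

variable [DecidableEq ι] [Fintype α]

theorem card_filter_filter_ne_eq (y : ι → α) (T : Finset ι) :
    #{z : ι → α | ({i | z i ≠ y i} : Finset ι) = T} = (Fintype.card α - 1) ^ #T := by
  have hpi : ({z : ι → α | ({i | z i ≠ y i} : Finset ι) = T} : Finset (ι → α)) =
      Fintype.piFinset fun i => if i ∈ T then univ.erase (y i) else {y i} := by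
    ext z
    rw [mem_filter, Fintype.mem_piFinset, Finset.ext_iff]
    refine and_iff_right (mem_univ z) |>.trans (forall_congr' fun i => ?_)
    split_ifs with hi <;> simp [hi]
  rw [hpi, Fintype.card_piFinset]
  simp [apply_ite Finset.card, Finset.card_erase_of_mem]

theorem card_hammingSphere (y : ι → α) (r : ℕ) :
    #{z : ι → α | hammingDist z y = r} =
      (Fintype.card ι).choose r * (Fintype.card α - 1) ^ r := by
  rw [card_eq_sum_card_fiberwise (f := fun z => ({i | z i ≠ y i} : Finset ι))
    (t := powersetCard r univ)]
  · rw [← Finset.card_univ (α := ι), ← card_powersetCard, card_eq_sum_ones, sum_mul]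
    refine sum_congr rfl fun T hT => ?_
    rw [← (mem_powersetCard.1 hT).2, one_mul, ← card_filter_filter_ne_eq y T]
    congr 1
    ext z
    simp only [mem_filter, mem_univ, true_and, and_iff_right_iff_imp]
    rintro rfl
    rfl
  · intro z hz
    simpa [hammingDist] using hz

theorem card_hammingBall (y : ι → α) (r : ℕ) :
    #{z : ι → α | hammingDist z y ≤ r} =
      ∑ i ∈ range (r + 1), (Fintype.card ι).choose i * (Fintype.card α - 1) ^ i := by
  rw [card_eq_sum_card_fiberwise (f := fun z => hammingDist z y) (t := range (r + 1))]
  · refine sum_congr rfl fun i hi => ?_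
    rw [← card_hammingSphere y i]
    congr 1
    ext z
    simp only [mem_filter, mem_univ, true_and, and_iff_right_iff_imp]
    rintro rfl
    exact Nat.lt_succ_iff.1 (mem_range.1 hi)
  · intro z hz
    simpa [Nat.lt_succ_iff] using hz

end Hamming

theorem exists_card_eq_card_inter_le {ι : Type*} [Fintype ι] [DecidableEq ι] (M : Finset ι)
    {t p : ℕ} (hM : #M ≤ t + p) (ht : t ≤ Fintype.card ι) :
    ∃ S : Finset ι, #S = Fintype.card ι - t ∧ #(S ∩ M) ≤ p := by
  obtain ⟨A, hAM, hA⟩ := exists_subset_card_eq (Nat.sub_le #M p)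
  obtain ⟨T, hAT, -, hT⟩ := exists_subsuperset_card_eq (n := t) (subset_univ A) (by omega)
    (by rwa [card_univ])
  refine ⟨Tᶜ, by rw [card_compl, hT], ?_⟩
  calc #(Tᶜ ∩ M) ≤ #(M \ A) := card_le_card fun i hi => by
        simp only [mem_inter, mem_compl] at hi
        exact mem_sdiff.2 ⟨hi.2, fun hiA => hi.1 (hAT hiA)⟩
    _ ≤ p := by rw [card_sdiff_of_subset hAM]; omega

theorem Fin.exists_strictMono_apply_eq {k n : ℕ} (hk : k ≤ n) {c : Fin k} {j : Fin n}
    (hcj : (c : ℕ) ≤ j) (hjc : (j : ℕ) ≤ c + (n - k)) :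
    ∃ g : Fin k → Fin n, StrictMono g ∧ g c = j := by
  refine ⟨fun i => if h : (i : ℕ) < c then ⟨i, by omega⟩ else if i = c then j
    else ⟨i + (n - k), by omega⟩, fun a b hab => ?_, by simp⟩
  simp only
  split_ifs <;> simp only [Fin.lt_def] <;> omega

theorem exists_strictMono_comp_ne {α : Type*} {k n : ℕ} (x : Fin n → α) (hx : ∃ i j, x i ≠ x j)
    (hk0 : 0 < k) (hk : k < n) :
    ∃ g : Fin k → Fin n, StrictMono g ∧ x ∘ g ≠ x ∘ Fin.castLE hk.le := by
  by_contra! h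
  have hconst : ∀ j : ℕ, (hj : j < n) → x ⟨j, hj⟩ = x ⟨0, by omega⟩ := by
    intro j
    induction j using Nat.strong_induction_on with
    | _ j ih =>
      intro hj
      rcases Nat.eq_zero_or_pos j with rfl | hj0
      · rfl
      -- a subsequence may put `x j` at a position `c < j`, where the prefix reads `x c`
      obtain ⟨c, hcj, hck, hjc⟩ : ∃ c, c < j ∧ c < k ∧ j ≤ c + (n - k) :=
        ⟨min (j - 1) (k - 1), by omega, by omega, by omega⟩
      obtain ⟨g, hg, hgc⟩ := Fin.exists_strictMono_apply_eq hk.le (c := ⟨c, hck⟩) (j := ⟨j, hj⟩)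
        hcj.le hjc
      have hxj := congrFun (h g hg) ⟨c, hck⟩
      simp only [Function.comp_apply, hgc] at hxj
      rw [hxj]
      exact ih c hcj _
  obtain ⟨i, j, hij⟩ := hx
  exact hij (by rw [hconst i i.2, hconst j j.2])

section Subsequence

variable {q n k : ℕ}

theorem subseqOf_eq_comp (x : Fin n → Fin q) {g : Fin k → Fin n} (hg : StrictMono g)
    {S : Finset (Fin n)} (hS : ∀ i, g i ∈ S) (h : #S = k) :
    subseqOf x S h = x ∘ g := by
  funext i
  simp only [subseqOf, coe_orderIsoOfFin_apply, ← orderEmbOfFin_unique h hS hg,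
    Function.comp_apply]

theorem subseqOf_map_castLE {m : ℕ} (hmn : m ≤ n) (x : Fin n → Fin q) (S : Finset (Fin m))
    (h : #S = k) (h' : #(S.map (Fin.castLEEmb hmn)) = k) :
    subseqOf x (S.map (Fin.castLEEmb hmn)) h' = subseqOf (x ∘ Fin.castLE hmn) S h :=
  subseqOf_eq_comp x ((Fin.strictMono_castLE hmn).comp (S.orderIsoOfFin h).strictMono)
    (fun i => mem_map_of_mem _ (S.orderIsoOfFin h i).2) h'

theorem hammingDist_subseqOf (u v : Fin n → Fin q) (S : Finset (Fin n)) (h : #S = k) :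
    hammingDist (subseqOf u S h) (subseqOf v S h) = #{i ∈ S | u i ≠ v i} := by
  rw [hammingDist, card_filter, card_filter, ← sum_coe_sort S]
  exact Fintype.sum_equiv (S.orderIsoOfFin h).toEquiv _ _ fun i => rfl

end Subsequence

theorem mem_idsBall_of_hammingDist_le {q n m s t p : ℕ} (hmn : m ≤ n) (hm : m = n - s + t)
    {x : Fin n → Fin q} {z : Fin m → Fin q} (hz : hammingDist z (x ∘ Fin.castLE hmn) ≤ t + p) :
    z ∈ (idsBall q s p x : Set (Fin m → Fin q)) := by
  obtain ⟨S, hS, hSM⟩ := exists_card_eq_card_inter_le _ hz (by rw [Fintype.card_fin]; omega)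
  rw [Fintype.card_fin] at hS
  have hS' : #S = n - s := by omega
  refine ⟨S.map (Fin.castLEEmb hmn), S, by rw [card_map, hS'], hS', ?_⟩
  rw [subseqOf_map_castLE hmn x S hS', hammingDist_subseqOf]
  calc _ = #(S ∩ ({i | z i ≠ x (Fin.castLE hmn i)} : Finset (Fin m))) := by
        rw [← filter_mem_eq_inter]
        simp [ne_comm]
    _ ≤ p := hSM

theorem exists_mem_idsBall_lt_hammingDist {q n m s t p : ℕ} (hmn : m ≤ n) (hm : m = n - s + t)
    (hs : n - s < n) (hp : p < n - s) (x : Fin n → Fin q) (hx : ∃ i j, x i ≠ x j) :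
    ∃ z ∈ (idsBall q s p x : Set (Fin m → Fin q)),
      t + p < hammingDist z (x ∘ Fin.castLE hmn) := by
  subst hm
  have : Nontrivial (Fin q) := let ⟨_, _, h⟩ := hx; ⟨⟨_, _, h⟩⟩
  obtain ⟨g, hg, hgx⟩ := exists_strictMono_comp_ne x hx (by omega) hs
  obtain ⟨w, hwu, hwv⟩ := exists_hammingDist_le_lt hgx (p := p) (by simpa using hp)
  choose f hf using fun a : Fin q => exists_ne a
  set y := x ∘ Fin.castLE hmn
  set r := y ∘ Fin.natAdd (n - s)
  refine ⟨Fin.append w (f ∘ r), ⟨univ.map ⟨g, hg.injective⟩,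
    univ.map (Fin.castAddEmb t), by simp, by simp, ?_⟩, ?_⟩
  · rw [subseqOf_eq_comp x hg (fun i => mem_map_of_mem _ (mem_univ i)),
      subseqOf_eq_comp _ (Fin.strictMono_castAdd t) (fun i => mem_map_of_mem _ (mem_univ i)),
      show Fin.append w (f ∘ r) ∘ Fin.castAdd t = w from funext (Fin.append_left _ _),
      hammingDist_comm]
    exact hwu
  · have hy : Fin.append (x ∘ Fin.castLE hs.le) r = y := Fin.append_castAdd_natAdd
    rw [← hy, hammingDist_append, hammingDist_eq_card_of_forall_ne (u := f ∘ r) fun i => hf _,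
      Fintype.card_fin]
    omega

theorem idsBall_t_lt_s_strict_general (n q t s p : ℕ) (hts : t < s) (hsp : s + p < n)
    (x : Fin n → Fin q) (hx : ∃ i j, x i ≠ x j) :
    (idsBall q s p x : Set (Fin (n + t - s) → Fin q)).ncard >
      ∑ i ∈ Finset.range (t + p + 1), (n + t - s).choose i * (q - 1) ^ i := by
  have hmn : n + t - s ≤ n := by omega
  obtain ⟨z, hz, hfar⟩ := exists_mem_idsBall_lt_hammingDist (s := s) (t := t) (p := p) hmn
    (by omega) (by omega) (by omega) x hx
  set ball : Finset (Fin (n + t - s) → Fin q) := {w | hammingDist w (x ∘ Fin.castLE hmn) ≤ t + p}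
  have hball : ↑(insert z ball) ⊆ (idsBall q s p x : Set (Fin (n + t - s) → Fin q)) := by
    intro w hw
    rw [coe_insert, Set.mem_insert_iff] at hw
    rcases hw with rfl | hw
    · exact hz
    · exact mem_idsBall_of_hammingDist_le hmn (by omega) (mem_filter.1 hw).2
  calc ∑ i ∈ range (t + p + 1), (n + t - s).choose i * (q - 1) ^ i = #ball := by
        rw [card_hammingBall, Fintype.card_fin, Fintype.card_fin]
    _ < #(insert z ball) :=
        card_lt_card (ssubset_insert fun h => not_lt.2 (mem_filter.1 h).2 hfar)
    _ ≤ _ := by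
        rw [← Set.ncard_coe_finset]
        exact Set.ncard_le_ncard hball (Set.toFinite _)

/-- strict inequality for `B_{t,s,p}(x)` in the case `t < s`. -/
theorem idsBall_t_lt_s_strict (n q t s p : ℕ) (hq : 1 ≤ q) (hts : t < s)
    (hsp : s + p < n) (hsp0 : (s, p) ≠ (0, 0))
    (x : Fin n → Fin q) (hx : ∃ i j, x i ≠ x j) :
    (idsBall q s p x : Set (Fin (n + t - s) → Fin q)).ncard >
      ∑ i ∈ Finset.range (t + p + 1), (n + t - s).choose i * (q - 1) ^ i :=
  idsBall_t_lt_s_strict_general n q t s p hts hsp x hx
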